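/- Let ρ ∈ M_n(ℂ) be positive definite and let 𝒜 be a real *-subalgebra of M_n(ℂ) such that ρ A ρ⁻¹ ∈ 𝒜 for every A ∈ 𝒜. Let 𝒮 be a family of Hermitian n×n matrices such that for every X ∈ 𝒮 there exists a Hermitian matrix L_X ∈ 𝒜 with X = (L_X ρ + ρ L_X)/2 (a local model whose symmetric logarithmic derivatives lie in 𝒜). Then 𝒜 is sufficient for 𝒮: there exists a real conditional expectation α onto 𝒜 such that Re Tr(X B) = Re Tr(X α(B)) for all X ∈ 𝒮 and all B ∈ M_n(ℂ). If moreover 𝒜 is a complex *-subalgebra, then α can be chosen complex-linear. -/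

import Mathlib

open Matrix Complex Filter
open scoped ComplexOrder

abbrev Mat (n : ℕ) := Matrix (Fin n) (Fin n) ℂ

def IsRealStarSubalgebra {n : ℕ} (𝒜 : Set (Mat n)) : Prop :=
  (∀ A ∈ 𝒜, ∀ B ∈ 𝒜, A + B ∈ 𝒜) ∧
  (∀ (r : ℝ), ∀ A ∈ 𝒜, r • A ∈ 𝒜) ∧
  (∀ A ∈ 𝒜, ∀ B ∈ 𝒜, A * B ∈ 𝒜) ∧
  (∀ A ∈ 𝒜, Aᴴ ∈ 𝒜) ∧
  (1 : Mat n) ∈ 𝒜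

def IsRealPositiveMap {n : ℕ} (α : Mat n →ₗ[ℝ] Mat n) : Prop :=
  ∀ B : Mat n, B.PosSemidef → (α B).PosSemidef

def IsRealCondExp {n : ℕ} (𝒜 : Set (Mat n)) (α : Mat n →ₗ[ℝ] Mat n) : Prop :=
  IsRealPositiveMap α ∧ (∀ B : Mat n, α B ∈ 𝒜) ∧
  (∀ A ∈ 𝒜, ∀ B : Mat n, α (A * B) = A * α B)

/-!
The conditional expectation is the projection `E` onto `𝒜` that is orthogonal for the real inner
product `⟪C, B⟫ = Re Tr(Cᴴ B ρ)`. Left and right multiplication by `A ∈ 𝒜` and `ᴴ` have adjoints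
for this inner product that preserve `𝒜` (for the last two this is where `ρ 𝒜 ρ⁻¹ ⊆ 𝒜` enters),
so `E` commutes with them; so does multiplication by `i` when `i 𝒜 ⊆ 𝒜`. For positivity, given
`B ≥ 0` put `y = (E B)⁻ ∈ 𝒜`: then `E (y B y) = y (E B) y = -y³`, and as `E` preserves
`Re Tr(· ρ)`, `0 ≤ Re Tr(y B y ρ) = -Re Tr(y³ ρ) ≤ 0`, which forces `y = 0`. Finally
`Re Tr(X B) = ⟪Xᴴ ρ⁻¹, B⟫`, and `Xᴴ ρ⁻¹ = (ρ L ρ⁻¹ + L) / 2 ∈ 𝒜` when `X = (L ρ + ρ L) / 2`.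
-/

open scoped MatrixOrder

namespace Matrix

variable {ι : Type*} [Fintype ι] [DecidableEq ι] {ρ : Matrix ι ι ℂ}

namespace PosSemidef

variable {P : Matrix ι ι ℂ}

/-- Writing `ρ = bᴴ b` with `b` invertible, `Tr(P ρ) = Tr(b P bᴴ)` is the trace of a
positive semidefinite matrix that vanishes only with `P`. -/
private lemma exists_trace_mul_posDef_eq (hP : P.PosSemidef) (hρ : ρ.PosDef) :
    ∃ Q : Matrix ι ι ℂ, Q.PosSemidef ∧ (Q = 0 ↔ P = 0) ∧ (P * ρ).trace = Q.trace := by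
  obtain ⟨b, hb, rfl⟩ :=
    CStarAlgebra.isStrictlyPositive_iff_eq_star_mul_self.mp hρ.isStrictlyPositive
  refine ⟨b * P * bᴴ, hP.mul_mul_conjTranspose_same b, ?_, ?_⟩
  · rw [← star_eq_conjTranspose, hb.star.mul_left_eq_zero, hb.mul_right_eq_zero]
  · rw [star_eq_conjTranspose, ← mul_assoc, trace_mul_cycle]

lemma re_trace_mul_posDef_nonneg (hP : P.PosSemidef) (hρ : ρ.PosDef) :
    0 ≤ (P * ρ).trace.re := by
  obtain ⟨Q, hQ, -, hPQ⟩ := hP.exists_trace_mul_posDef_eq hρ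
  exact hPQ ▸ (Complex.nonneg_iff.mp hQ.trace_nonneg).1

lemma re_trace_mul_posDef_eq_zero_iff (hP : P.PosSemidef) (hρ : ρ.PosDef) :
    (P * ρ).trace.re = 0 ↔ P = 0 := by
  obtain ⟨Q, hQ, hQP, hPQ⟩ := hP.exists_trace_mul_posDef_eq hρ
  rw [← hQP, hPQ, ← hQ.trace_eq_zero_iff]
  obtain ⟨-, him⟩ := Complex.nonneg_iff.mp hQ.trace_nonneg
  exact ⟨fun h ↦ Complex.ext h him.symm, fun h ↦ by simp [h]⟩

end PosSemidef

noncomputable def weightedTraceForm (ρ : Matrix ι ι ℂ) : LinearMap.BilinForm ℝ (Matrix ι ι ℂ) :=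
  LinearMap.mk₂ ℝ (fun C B ↦ (Cᴴ * B * ρ).trace.re)
    (fun _ _ _ ↦ by simp [add_mul]) (fun _ _ _ ↦ by simp)
    (fun _ _ _ ↦ by simp [mul_add, add_mul]) (fun _ _ _ ↦ by simp)

@[simp]
lemma weightedTraceForm_apply (C B : Matrix ι ι ℂ) :
    weightedTraceForm ρ C B = (Cᴴ * B * ρ).trace.re :=
  rfl

lemma weightedTraceForm_isSymm (hρ : ρ.IsHermitian) : (weightedTraceForm ρ).IsSymm := by
  refine ⟨fun C B ↦ ?_⟩
  rw [weightedTraceForm_apply, ← Complex.conj_re, starRingEnd_apply, ← trace_conjTranspose]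
  simp [hρ.eq, trace_mul_comm ρ, mul_assoc]

lemma weightedTraceForm_self_eq_zero_iff (hρ : ρ.PosDef) (C : Matrix ι ι ℂ) :
    weightedTraceForm ρ C C = 0 ↔ C = 0 := by
  rw [weightedTraceForm_apply,
    (posSemidef_conjTranspose_mul_self C).re_trace_mul_posDef_eq_zero_iff hρ,
    conjTranspose_mul_self_eq_zero]

lemma weightedTraceForm_mul_left (A C B : Matrix ι ι ℂ) :
    weightedTraceForm ρ C (A * B) = weightedTraceForm ρ (Aᴴ * C) B := by
  simp [mul_assoc]

lemma weightedTraceForm_mul_right (hρ : ρ.IsHermitian) (hρu : IsUnit ρ) (A C B : Matrix ι ι ℂ) :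
    weightedTraceForm ρ C (B * A) = weightedTraceForm ρ (C * (ρ * Aᴴ * ρ⁻¹)) B := by
  have h : (C * (ρ * Aᴴ * ρ⁻¹))ᴴ * B * ρ = ρ⁻¹ * (A * ρ * Cᴴ * B) * ρ := by
    simp [conjTranspose_nonsing_inv, hρ.eq, mul_assoc]
  rw [weightedTraceForm_apply, weightedTraceForm_apply, h, trace_conj' hρu,
    show Cᴴ * (B * A) * ρ = (Cᴴ * B) * (A * ρ) by noncomm_ring, trace_mul_comm, ← mul_assoc]

lemma weightedTraceForm_conjTranspose (hρ : ρ.IsHermitian) (hρu : IsUnit ρ) (C B : Matrix ι ι ℂ) :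
    weightedTraceForm ρ C Bᴴ = weightedTraceForm ρ (ρ * Cᴴ * ρ⁻¹) B := by
  have h : (ρ * Cᴴ * ρ⁻¹)ᴴ * B * ρ = ρ⁻¹ * (C * ρ * B) * ρ := by
    simp [conjTranspose_nonsing_inv, hρ.eq, mul_assoc]
  rw [weightedTraceForm_apply, weightedTraceForm_apply, h, trace_conj' hρu, ← Complex.conj_re,
    starRingEnd_apply, ← trace_conjTranspose]
  simp [hρ.eq, trace_mul_comm C, mul_assoc]

lemma weightedTraceForm_I_smul (C B : Matrix ι ι ℂ) :
    weightedTraceForm ρ C (I • B) = weightedTraceForm ρ (-I • C) B := by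
  simp

lemma weightedTraceForm_one (B : Matrix ι ι ℂ) :
    weightedTraceForm ρ 1 B = (B * ρ).trace.re := by
  simp

lemma re_trace_mul_eq_weightedTraceForm (hρ : ρ.IsHermitian) (hρu : IsUnit ρ) (X B : Matrix ι ι ℂ) :
    (X * B).trace.re = weightedTraceForm ρ (Xᴴ * ρ⁻¹) B := by
  have h : (Xᴴ * ρ⁻¹)ᴴ * B * ρ = ρ⁻¹ * (X * B) * ρ := by
    simp [conjTranspose_nonsing_inv, hρ.eq, mul_assoc]
  rw [weightedTraceForm_apply, h, trace_conj' hρu]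

lemma isCompl_orthogonal_weightedTraceForm (hρ : ρ.PosDef) (W : Submodule ℝ (Matrix ι ι ℂ)) :
    IsCompl W ((weightedTraceForm ρ).orthogonal W) := by
  refine (LinearMap.BilinForm.isCompl_orthogonal_iff_disjoint
    (weightedTraceForm_isSymm hρ.isHermitian).isRefl).mpr ?_
  rw [Submodule.disjoint_def]
  exact fun C hC hCW ↦ (weightedTraceForm_self_eq_zero_iff hρ C).mp (hCW C hC)

noncomputable def weightedTraceProj (hρ : ρ.PosDef) (W : Submodule ℝ (Matrix ι ι ℂ)) :
    Matrix ι ι ℂ →ₗ[ℝ] Matrix ι ι ℂ :=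
  W.projection _ (isCompl_orthogonal_weightedTraceForm hρ W)

section weightedTraceProj

variable (hρ : ρ.PosDef) {W : Submodule ℝ (Matrix ι ι ℂ)}

lemma weightedTraceProj_mem (B : Matrix ι ι ℂ) : weightedTraceProj hρ W B ∈ W :=
  Submodule.projection_apply_mem _ B

lemma weightedTraceForm_weightedTraceProj {C : Matrix ι ι ℂ} (hC : C ∈ W) (B : Matrix ι ι ℂ) :
    weightedTraceForm ρ C (weightedTraceProj hρ W B) = weightedTraceForm ρ C B := by
  have h := Submodule.sub_projection_mem (isCompl_orthogonal_weightedTraceForm hρ W) B C hC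
  rw [map_sub, sub_eq_zero] at h
  exact h.symm

lemma weightedTraceProj_eq_of_forall {B y : Matrix ι ι ℂ} (hy : y ∈ W)
    (h : ∀ C ∈ W, weightedTraceForm ρ C B = weightedTraceForm ρ C y) :
    weightedTraceProj hρ W B = y := by
  set d := weightedTraceProj hρ W B - y
  have hd : d ∈ W := W.sub_mem (weightedTraceProj_mem hρ B) hy
  rw [← sub_eq_zero, ← weightedTraceForm_self_eq_zero_iff hρ d, map_sub,
    weightedTraceForm_weightedTraceProj hρ hd, h d hd, sub_self]

lemma weightedTraceProj_intertwines {T T' : Matrix ι ι ℂ → Matrix ι ι ℂ}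
    (hTT' : ∀ C B, weightedTraceForm ρ C (T B) = weightedTraceForm ρ (T' C) B)
    (hT : ∀ A ∈ W, T A ∈ W) (hT' : ∀ C ∈ W, T' C ∈ W) (B : Matrix ι ι ℂ) :
    weightedTraceProj hρ W (T B) = T (weightedTraceProj hρ W B) :=
  weightedTraceProj_eq_of_forall hρ (hT _ (weightedTraceProj_mem hρ B)) fun C hC ↦ by
    rw [hTT', hTT', weightedTraceForm_weightedTraceProj hρ (hT' C hC)]

end weightedTraceProj

lemma IsHermitian.eq_zero_of_mul_mul_self_eq_zero {y : Matrix ι ι ℂ} (hy : y.IsHermitian)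
    (h : y * y * y = 0) : y = 0 := by
  have h4 : (y * y)ᴴ * (y * y) = 0 := by
    rw [conjTranspose_mul, hy.eq, ← mul_assoc, h, zero_mul]
  rw [← conjTranspose_mul_self_eq_zero, hy.eq]
  exact conjTranspose_mul_self_eq_zero.mp h4

lemma conjTranspose_jordanProduct_mul_inv (hρ : ρ.IsHermitian) (hρu : IsUnit ρ)
    {L : Matrix ι ι ℂ} (hL : L.IsHermitian) :
    ((2⁻¹ : ℂ) • (L * ρ + ρ * L))ᴴ * ρ⁻¹ = (2⁻¹ : ℝ) • (ρ * L * ρ⁻¹ + L) := by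
  have hρρ : ρ * ρ⁻¹ = 1 := mul_nonsing_inv ρ ((isUnit_iff_isUnit_det ρ).mp hρu)
  simp [hρ.eq, hL.eq, add_mul, mul_assoc, hρρ, ← Complex.coe_smul]

section StarSubalgebra

variable (hρ : ρ.PosDef) {𝒜 : StarSubalgebra ℝ (Matrix ι ι ℂ)}

lemma weightedTraceProj_mul_left {A : Matrix ι ι ℂ} (hA : A ∈ 𝒜) (B : Matrix ι ι ℂ) :
    weightedTraceProj hρ 𝒜.toSubmodule (A * B) = A * weightedTraceProj hρ 𝒜.toSubmodule B :=
  weightedTraceProj_intertwines hρ (weightedTraceForm_mul_left A)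
    (fun _ hC ↦ 𝒜.mul_mem hA hC) (fun _ hC ↦ 𝒜.mul_mem (star_mem (s := 𝒜) hA) hC) B

lemma weightedTraceProj_mul_right (hmod : ∀ A ∈ 𝒜, ρ * A * ρ⁻¹ ∈ 𝒜) {A : Matrix ι ι ℂ}
    (hA : A ∈ 𝒜) (B : Matrix ι ι ℂ) :
    weightedTraceProj hρ 𝒜.toSubmodule (B * A) = weightedTraceProj hρ 𝒜.toSubmodule B * A :=
  weightedTraceProj_intertwines hρ
    (weightedTraceForm_mul_right hρ.isHermitian hρ.isUnit A) (fun _ hC ↦ 𝒜.mul_mem hC hA)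
    (fun _ hC ↦ 𝒜.mul_mem hC (hmod _ (star_mem (s := 𝒜) hA))) B

lemma weightedTraceProj_conjTranspose (hmod : ∀ A ∈ 𝒜, ρ * A * ρ⁻¹ ∈ 𝒜) (B : Matrix ι ι ℂ) :
    weightedTraceProj hρ 𝒜.toSubmodule Bᴴ = (weightedTraceProj hρ 𝒜.toSubmodule B)ᴴ :=
  weightedTraceProj_intertwines hρ (weightedTraceForm_conjTranspose hρ.isHermitian hρ.isUnit)
    (fun _ hA ↦ star_mem (s := 𝒜) hA) (fun _ hC ↦ hmod _ (star_mem (s := 𝒜) hC)) B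

lemma weightedTraceProj_I_smul (hI : ∀ A ∈ 𝒜, I • A ∈ 𝒜) (B : Matrix ι ι ℂ) :
    weightedTraceProj hρ 𝒜.toSubmodule (I • B) = I • weightedTraceProj hρ 𝒜.toSubmodule B :=
  weightedTraceProj_intertwines hρ weightedTraceForm_I_smul (fun _ hA ↦ hI _ hA)
    (fun C hC ↦ by simpa [neg_smul] using 𝒜.neg_mem (hI C hC)) B

lemma re_trace_weightedTraceProj_mul (B : Matrix ι ι ℂ) :
    (weightedTraceProj hρ 𝒜.toSubmodule B * ρ).trace.re = (B * ρ).trace.re := by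
  rw [← weightedTraceForm_one, ← weightedTraceForm_one,
    weightedTraceForm_weightedTraceProj hρ 𝒜.one_mem]

lemma re_trace_mul_weightedTraceProj {X : Matrix ι ι ℂ} (hX : Xᴴ * ρ⁻¹ ∈ 𝒜) (B : Matrix ι ι ℂ) :
    (X * weightedTraceProj hρ 𝒜.toSubmodule B).trace.re = (X * B).trace.re := by
  rw [re_trace_mul_eq_weightedTraceForm hρ.isHermitian hρ.isUnit,
    re_trace_mul_eq_weightedTraceForm hρ.isHermitian hρ.isUnit,
    weightedTraceForm_weightedTraceProj hρ hX]

lemma weightedTraceProj_posSemidef (hmod : ∀ A ∈ 𝒜, ρ * A * ρ⁻¹ ∈ 𝒜) {B : Matrix ι ι ℂ}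
    (hB : B.PosSemidef) : (weightedTraceProj hρ 𝒜.toSubmodule B).PosSemidef := by
  set x := weightedTraceProj hρ 𝒜.toSubmodule B
  have hx : x.IsHermitian := by
    have h := weightedTraceProj_conjTranspose hρ hmod B
    rwa [hB.isHermitian.eq, eq_comm] at h
  set y := x⁻
  have hy : y.PosSemidef := (CFC.negPart_nonneg x).posSemidef
  have hyA : y ∈ 𝒜 := by
    have : IsClosed (𝒜 : Set (Matrix ι ι ℂ)) := 𝒜.toSubmodule.closed_of_finiteDimensional
    exact cfcₙ_mem (𝕜 := ℝ) (𝕜' := ℝ) _ (weightedTraceProj_mem hρ (W := 𝒜.toSubmodule) B)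
  have hyxy : y * x * y = -(y * y * y) := by
    conv_lhs => rw [← CFC.posPart_sub_negPart x hx]
    rw [mul_sub, sub_mul, CFC.negPart_mul_posPart, zero_mul, zero_sub]
  have hyBy : (y * B * y * ρ).trace.re = -(y * y * y * ρ).trace.re := by
    rw [← re_trace_weightedTraceProj_mul hρ, weightedTraceProj_mul_right hρ hmod hyA,
      weightedTraceProj_mul_left hρ hyA, hyxy, neg_mul, trace_neg, Complex.neg_re]
  have hyBy_nonneg := (hB.mul_mul_conjTranspose_same y).re_trace_mul_posDef_nonneg hρ
  have hy3 := hy.mul_mul_conjTranspose_same y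
  rw [hy.isHermitian.eq] at hyBy_nonneg hy3
  have hy3_zero : y * y * y = 0 := (hy3.re_trace_mul_posDef_eq_zero_iff hρ).mp
    (le_antisymm (by linarith) (hy3.re_trace_mul_posDef_nonneg hρ))
  rw [← nonneg_iff_posSemidef, ← CFC.negPart_eq_zero_iff x hx]
  exact hy.isHermitian.eq_zero_of_mul_mul_self_eq_zero hy3_zero

end StarSubalgebra

end Matrix

def IsRealStarSubalgebra.toStarSubalgebra {n : ℕ} {𝒜 : Set (Mat n)}
    (h𝒜 : IsRealStarSubalgebra 𝒜) : StarSubalgebra ℝ (Mat n) where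
  carrier := 𝒜
  add_mem' ha hb := h𝒜.1 _ ha _ hb
  mul_mem' ha hb := h𝒜.2.2.1 _ ha _ hb
  one_mem' := h𝒜.2.2.2.2
  algebraMap_mem' r := by
    simpa [Algebra.algebraMap_eq_smul_one] using h𝒜.2.1 r 1 h𝒜.2.2.2.2
  star_mem' ha := h𝒜.2.2.2.1 _ ha

theorem stmt17_general {n : ℕ} (ρ : Mat n) (hρ : ρ.PosDef)
    (𝒜 : Set (Mat n)) (h𝒜 : IsRealStarSubalgebra 𝒜)
    (hmod : ∀ A ∈ 𝒜, ρ * A * ρ⁻¹ ∈ 𝒜)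
    (𝒮 : Set (Mat n))
    (hsld : ∀ X ∈ 𝒮, ∃ L ∈ 𝒜, L.IsHermitian ∧ X = (2⁻¹ : ℂ) • (L * ρ + ρ * L)) :
    (∃ α : Mat n →ₗ[ℝ] Mat n, IsRealCondExp 𝒜 α ∧
      ∀ X ∈ 𝒮, ∀ B : Mat n, ((X * B).trace).re = ((X * α B).trace).re) ∧
    ((∀ A ∈ 𝒜, (Complex.I : ℂ) • A ∈ 𝒜) →
      ∃ α : Mat n →ₗ[ℝ] Mat n, IsRealCondExp 𝒜 α ∧
        (∀ B : Mat n, α ((Complex.I : ℂ) • B) = (Complex.I : ℂ) • α B) ∧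
        ∀ X ∈ 𝒮, ∀ B : Mat n, ((X * B).trace).re = ((X * α B).trace).re) := by
  let 𝒜' := h𝒜.toStarSubalgebra
  let α := weightedTraceProj hρ 𝒜'.toSubmodule
  have hα : IsRealCondExp 𝒜 α :=
    ⟨fun _ hB ↦ weightedTraceProj_posSemidef hρ (𝒜 := 𝒜') hmod hB,
      weightedTraceProj_mem hρ (W := 𝒜'.toSubmodule),
      fun _ hA ↦ weightedTraceProj_mul_left hρ (𝒜 := 𝒜') hA⟩
  have hsuff : ∀ X ∈ 𝒮, ∀ B : Mat n, ((X * B).trace).re = ((X * α B).trace).re := by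
    intro X hX B
    obtain ⟨L, hL, hLH, rfl⟩ := hsld X hX
    refine (re_trace_mul_weightedTraceProj hρ ?_ B).symm
    rw [conjTranspose_jordanProduct_mul_inv hρ.isHermitian hρ.isUnit hLH]
    exact 𝒜'.smul_mem (𝒜'.add_mem (hmod L hL) hL) _
  exact ⟨⟨α, hα, hsuff⟩, fun hI ↦ ⟨α, hα, weightedTraceProj_I_smul hρ (𝒜 := 𝒜') hI, hsuff⟩⟩

/-- Let `ρ` be positive definite and `𝒜` a ρ-modular-invariant real
`*`-subalgebra (`ρ A ρ⁻¹ ∈ 𝒜` for `A ∈ 𝒜`). If `𝒮` is a family of Hermitian matrices such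
that every `X ∈ 𝒮` has a symmetric logarithmic derivative in `𝒜`
(`X = (L ρ + ρ L)/2` with `L ∈ 𝒜` Hermitian), then `𝒜` is sufficient for `𝒮`: there is a
real conditional expectation `α` onto `𝒜` with `Re Tr(X B) = Re Tr(X α(B))` for all
`X ∈ 𝒮` and all `B`; and if `𝒜` is moreover closed under multiplication by `i`, `α` can be
chosen complex-linear. -/
theorem stmt17 {n : ℕ} (ρ : Mat n) (hρ : ρ.PosDef)
    (𝒜 : Set (Mat n)) (h𝒜 : IsRealStarSubalgebra 𝒜)
    (hmod : ∀ A ∈ 𝒜, ρ * A * ρ⁻¹ ∈ 𝒜)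
    (𝒮 : Set (Mat n)) (hherm : ∀ X ∈ 𝒮, X.IsHermitian)
    (hsld : ∀ X ∈ 𝒮, ∃ L ∈ 𝒜, L.IsHermitian ∧ X = (2⁻¹ : ℂ) • (L * ρ + ρ * L)) :
    (∃ α : Mat n →ₗ[ℝ] Mat n, IsRealCondExp 𝒜 α ∧
      ∀ X ∈ 𝒮, ∀ B : Mat n, ((X * B).trace).re = ((X * α B).trace).re) ∧
    ((∀ A ∈ 𝒜, (Complex.I : ℂ) • A ∈ 𝒜) →
      ∃ α : Mat n →ₗ[ℝ] Mat n, IsRealCondExp 𝒜 α ∧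
        (∀ B : Mat n, α ((Complex.I : ℂ) • B) = (Complex.I : ℂ) • α B) ∧
        ∀ X ∈ 𝒮, ∀ B : Mat n, ((X * B).trace).re = ((X * α B).trace).re) :=
  stmt17_general ρ hρ 𝒜 h𝒜 hmod 𝒮 hsld
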